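/- arXiv:1602.06843 — 8 statements merged into one kernel-verified Lean document; each statement's English description precedes it below -/
import Mathlib

section
/- Let α ∈ ℂ with α ≠ 0, and let g be holomorphic on a neighborhood of α with a zero of order m ≥ 1 at α, i.e. g(z) = (z−α)^m h(z) with h holomorphic near α and h(α) ≠ 0. Then the function ν_g(z) = z − g(z)/(z g'(z)) has a removable singularity at α; its holomorphic extension F satisfies F(α) = α and F'(α) = 1 − 1/(mα), and for all sufficiently small r > 0, (1/(2πi)) ∮_{|z−α|=r} dz/(z − ν_g(z)) = mα. -/
/-!
Writing `g = (z - α)^m h`, one finds `g' = (z - α)^(m-1) (m h + (z - α) h')`, hence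
`z - ν_g(z) = (z - α) φ(z)` with `φ = h / (z (m h + (z - α) h'))` holomorphic near `α` and
`φ(α) = 1/(mα)`. So `F = z - (z - α) φ` extends `ν_g`, with `F(α) = α` and `F'(α) = 1 - φ(α)`,
and the integrand `1/(z - ν_g) = (z - α)⁻¹ φ⁻¹` has residue `φ(α)⁻¹ = mα` by Cauchy's formula.
-/

open Complex

/-- The nu function of a meromorphic function `g`: `ν_g(z) = z - g(z)/(z g'(z))`. -/
noncomputable def nu (g : ℂ → ℂ) (z : ℂ) : ℂ := z - g z / (z * deriv g z)

open Filter Topology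
open Metric (closedBall sphere)

theorem deriv_eq_of_eventuallyEq_sub_pow_mul {𝕜 : Type*} [NontriviallyNormedField 𝕜]
    {g h : 𝕜 → 𝕜} {α z : 𝕜} (k : ℕ) (hg : g =ᶠ[𝓝 z] fun w => (w - α) ^ (k + 1) * h w)
    (hh : DifferentiableAt 𝕜 h z) :
    deriv g z = (z - α) ^ k * ((k + 1 : ℕ) * h z + (z - α) * deriv h z) := by
  have hderiv : HasDerivAt (fun w => (w - α) ^ (k + 1) * h w)
      ((k + 1 : ℕ) * (z - α) ^ k * 1 * h z + (z - α) ^ (k + 1) * deriv h z) z :=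
    (((hasDerivAt_id' z).sub_const α).pow (k + 1)).mul hh.hasDerivAt
  rw [hg.deriv_eq, hderiv.deriv]
  ring

/-- For `g = (z - α)^m h` this is the holomorphic factor `φ` in `z - ν_g(z) = (z - α) φ(z)`. -/
noncomputable def nuFactor (m : ℕ) (α : ℂ) (h : ℂ → ℂ) (z : ℂ) : ℂ :=
  h z / (z * (m * h z + (z - α) * deriv h z))

theorem nu_eq_sub_mul_nuFactor {g h : ℂ → ℂ} {α z : ℂ} {m : ℕ} (hm : m ≠ 0)
    (hg : g =ᶠ[𝓝 z] fun w => (w - α) ^ m * h w) (hh : DifferentiableAt ℂ h z) (hz : z ≠ α) :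
    nu g z = z - (z - α) * nuFactor m α h z := by
  obtain ⟨k, rfl⟩ := Nat.exists_eq_succ_of_ne_zero hm
  have hpow : (z - α) ^ k ≠ 0 := pow_ne_zero k (sub_ne_zero.mpr hz)
  rw [nu, nuFactor, deriv_eq_of_eventuallyEq_sub_pow_mul k hg hh, hg.eq_of_nhds, pow_succ,
    mul_assoc, mul_left_comm z, mul_div_mul_left _ _ hpow, mul_div_assoc]

theorem nuFactor_self {h : ℂ → ℂ} {α : ℂ} {m : ℕ} (hm : m ≠ 0) (hα : α ≠ 0) (hhα : h α ≠ 0) :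
    nuFactor m α h α = (m * α)⁻¹ := by
  have : (m : ℂ) ≠ 0 := Nat.cast_ne_zero.mpr hm
  simp only [nuFactor, sub_self, zero_mul, add_zero]
  field_simp

theorem differentiableAt_nuFactor {h : ℂ → ℂ} {α z : ℂ} (m : ℕ) (hh : AnalyticAt ℂ h z)
    (hz : z * (m * h z + (z - α) * deriv h z) ≠ 0) :
    DifferentiableAt ℂ (nuFactor m α h) z := by
  have hh' : DifferentiableAt ℂ (deriv h) z := hh.deriv.differentiableAt
  unfold nuFactor
  fun_prop (disch := exact hz)

theorem eventually_differentiableAt_nuFactor_and_ne_zero {h : ℂ → ℂ} {α : ℂ} {m : ℕ}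
    (hm : m ≠ 0) (hα : α ≠ 0) (hh : AnalyticAt ℂ h α) (hhα : h α ≠ 0) :
    ∀ᶠ z in 𝓝 α, DifferentiableAt ℂ (nuFactor m α h) z ∧ nuFactor m α h z ≠ 0 := by
  have hcont := hh.continuousAt
  have hcont' := hh.deriv.continuousAt
  have hden : ContinuousAt (fun z => z * (m * h z + (z - α) * deriv h z)) α := by fun_prop
  filter_upwards [hh.eventually_analyticAt, hden.eventually_ne (y := 0) (by simp [hα, hm, hhα]),
    hcont.eventually_ne hhα] with z hzh hzden hzh0
  exact ⟨differentiableAt_nuFactor m hzh hzden, div_ne_zero hzh0 hzden⟩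

theorem hasDerivAt_self_sub_sub_mul {𝕜 : Type*} [NontriviallyNormedField 𝕜] {φ : 𝕜 → 𝕜}
    {φ' α : 𝕜} (hφ : HasDerivAt φ φ' α) :
    HasDerivAt (fun z => z - (z - α) * φ z) (1 - φ α) α := by
  have hderiv : HasDerivAt (fun z => z - (z - α) * φ z) (1 - (1 * φ α + (α - α) * φ')) α :=
    (hasDerivAt_id' α).sub (((hasDerivAt_id' α).sub_const α).mul hφ)
  exact hderiv.congr_deriv (by ring)

theorem circleIntegral_inv_of_eqOn_sub_mul {f φ : ℂ → ℂ} {c : ℂ} {R : ℝ} (hR : 0 < R)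
    (hφ : DifferentiableOn ℂ φ (closedBall c R)) (hφ0 : ∀ z ∈ closedBall c R, φ z ≠ 0)
    (hf : ∀ z ∈ sphere c R, f z = (z - c) * φ z) :
    (∮ z in C(c, R), (f z)⁻¹) = 2 * Real.pi * I * (φ c)⁻¹ := by
  calc (∮ z in C(c, R), (f z)⁻¹) = ∮ z in C(c, R), (z - c)⁻¹ • φ⁻¹ z :=
        circleIntegral.integral_congr hR.le fun z hz => by simp [hf z hz, mul_comm]
    _ = 2 * Real.pi * I * (φ c)⁻¹ :=
      (hφ.inv hφ0).circleIntegral_sub_inv_smul (Metric.mem_ball_self hR)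

/-- If `g` has a zero of order `m ≥ 1` at `α ≠ 0`, then `ν_g` has a removable singularity
at `α`; the holomorphic extension `F` satisfies `F α = α`, `F' α = 1 - 1/(mα)`, and the
holomorphic index of `ν_g` at `α` is `mα`. -/
theorem nu_at_zero_of_order
    (α : ℂ) (hα : α ≠ 0) (m : ℕ) (hm : 1 ≤ m)
    (g h : ℂ → ℂ) (U : Set ℂ) (hU : IsOpen U) (hαU : α ∈ U)
    (hh : DifferentiableOn ℂ h U) (hhα : h α ≠ 0)
    (hfact : ∀ z ∈ U, g z = (z - α) ^ m * h z) :
    ∃ (F : ℂ → ℂ) (V : Set ℂ), IsOpen V ∧ α ∈ V ∧ DifferentiableOn ℂ F V ∧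
      (∀ z ∈ V, z ≠ α → F z = nu g z) ∧
      F α = α ∧ deriv F α = 1 - 1 / (m * α) ∧
      ∃ r₀ > 0, ∀ r : ℝ, 0 < r → r < r₀ →
        (2 * Real.pi * Complex.I)⁻¹ * (∮ z in C(α, r), (z - nu g z)⁻¹) = m * α := by
  have hm0 : m ≠ 0 := Nat.one_le_iff_ne_zero.mp hm
  obtain ⟨V, hV, hVopen, hαV⟩ := eventually_nhds_iff.mp ((hU.eventually_mem hαU).and
    (eventually_differentiableAt_nuFactor_and_ne_zero hm0 hα (hh.analyticAt (hU.mem_nhds hαU))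
      hhα))
  have hnu : ∀ z ∈ V, z ≠ α → nu g z = z - (z - α) * nuFactor m α h z := fun z hz hzα =>
    have hzU := (hV z hz).1
    nu_eq_sub_mul_nuFactor hm0 (eventually_of_mem (hU.mem_nhds hzU) hfact)
      (hh.differentiableAt (hU.mem_nhds hzU)) hzα
  refine ⟨fun z => z - (z - α) * nuFactor m α h z, V, hVopen, hαV,
    fun z hz => have := (hV z hz).2.1; DifferentiableAt.differentiableWithinAt (by fun_prop),
    fun z hz hzα => (hnu z hz hzα).symm, by simp, ?_, ?_⟩
  · rw [(hasDerivAt_self_sub_sub_mul (hV α hαV).2.1.hasDerivAt).deriv, nuFactor_self hm0 hα hhα,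
      one_div]
  · obtain ⟨r₀, hr₀, hball⟩ := Metric.isOpen_iff.mp hVopen α hαV
    refine ⟨r₀, hr₀, fun r hr hrr₀ => ?_⟩
    have hsub : closedBall α r ⊆ V := (Metric.closedBall_subset_ball hrr₀).trans hball
    have hsphere : ∀ z ∈ sphere α r, z - nu g z = (z - α) * nuFactor m α h z := fun z hz => by
      have hzV := hsub (Metric.sphere_subset_closedBall hz)
      rw [hnu z hzV (Metric.ne_of_mem_sphere hz hr.ne')]
      ring
    rw [circleIntegral_inv_of_eqOn_sub_mul hr
      (fun z hz => (hV z (hsub hz)).2.1.differentiableWithinAt) (fun z hz => (hV z (hsub hz)).2.2)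
      hsphere, nuFactor_self hm0 hα hhα, inv_inv]
    exact inv_mul_cancel_left₀ (by simp [Real.pi_ne_zero]) _
end

section
/- Let α ∈ ℂ with α ≠ 0, and let g have a pole of order m ≥ 1 at α, i.e. g(z) = (z−α)^{−m} h(z) on a punctured neighborhood of α with h holomorphic near α and h(α) ≠ 0. Then the function ν_g(z) = z − g(z)/(z g'(z)) has a removable singularity at α; its holomorphic extension F satisfies F(α) = α and F'(α) = 1 + 1/(mα), and for all sufficiently small r > 0, (1/(2πi)) ∮_{|z−α|=r} dz/(z − ν_g(z)) = −mα. -/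
/-!
Near `α` write `g = h / (z - α) ^ m`. Then `g' / g = h' / h - m / (z - α)`, so
`g / (z g') = (z - α) h / (z ((z - α) h' - m h))`: the pole cancels, `ν_g` extends holomorphically
as `F z = z - (z - α) q z` with `q α = -1 / (m α)`, whence `F α = α` and `F' α = 1 - q α`.
For the index, `1 / (z - ν_g z) = z g' / g = z h' / h - m - m α / (z - α)`; the first two terms
are holomorphic on a small closed disc and the residue of the last one is `-m α`.
-/

open Complex Metric Filter Topology

lemma hasDerivAt_div_sub_pow {h : ℂ → ℂ} {h' α z : ℂ} (m : ℕ) (hh : HasDerivAt h h' z)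
    (hz : z ≠ α) :
    HasDerivAt (fun w ↦ h w / (w - α) ^ m)
      ((h' * (z - α) - m * h z) / (z - α) ^ (m + 1)) z := by
  have hzα : z - α ≠ 0 := sub_ne_zero.mpr hz
  refine (hh.fun_div (((hasDerivAt_id' z).sub_const α).fun_pow m)
    (pow_ne_zero m hzα)).congr_deriv ?_
  rcases m with _ | m
  · simpa using (mul_div_cancel_right₀ h' hzα).symm
  · simp only [Nat.add_sub_cancel, Nat.cast_add, Nat.cast_one]
    field_simp
    ring

/-- `nu g` for `g = h / (z - α) ^ m`, with the pole of `g` cancelled. -/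
noncomputable def nuOfPole (h : ℂ → ℂ) (α : ℂ) (m : ℕ) (z : ℂ) : ℂ :=
  z - (z - α) * (h z / (z * (deriv h z * (z - α) - m * h z)))

section LocalFactorization

variable {g h : ℂ → ℂ} {α z : ℂ} {m : ℕ}

lemma deriv_eq_of_eventuallyEq_div_sub_pow (hg : g =ᶠ[𝓝 z] fun w ↦ h w / (w - α) ^ m)
    (hh : DifferentiableAt ℂ h z) (hz : z ≠ α) :
    deriv g z = (deriv h z * (z - α) - m * h z) / (z - α) ^ (m + 1) := by
  rw [hg.deriv_eq, (hasDerivAt_div_sub_pow m hh.hasDerivAt hz).deriv]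

lemma nu_eq_nuOfPole (hg : g =ᶠ[𝓝 z] fun w ↦ h w / (w - α) ^ m)
    (hh : DifferentiableAt ℂ h z) (hz : z ≠ α) :
    nu g z = nuOfPole h α m z := by
  have hzα : z - α ≠ 0 := sub_ne_zero.mpr hz
  rw [nu, nuOfPole, hg.eq_of_nhds, deriv_eq_of_eventuallyEq_div_sub_pow hg hh hz,
    mul_div_assoc', div_div_eq_mul_div, pow_succ]
  congr 1
  field_simp

lemma sub_nu_inv_eq (hg : g =ᶠ[𝓝 z] fun w ↦ h w / (w - α) ^ m)
    (hh : DifferentiableAt ℂ h z) (hz : z ≠ α) (hhz : h z ≠ 0) :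
    (z - nu g z)⁻¹ = z * deriv h z / h z - m - m * α * (z - α)⁻¹ := by
  have hzα : z - α ≠ 0 := sub_ne_zero.mpr hz
  rw [nu, sub_sub_cancel, inv_div, hg.eq_of_nhds, deriv_eq_of_eventuallyEq_div_sub_pow hg hh hz]
  field_simp
  ring

end LocalFactorization

lemma nuOfPole_self (h : ℂ → ℂ) (α : ℂ) (m : ℕ) : nuOfPole h α m α = α := by
  simp [nuOfPole]

lemma hasDerivAt_sub_sub_mul {q : ℂ → ℂ} {α : ℂ} (hq : DifferentiableAt ℂ q α) :
    HasDerivAt (fun z ↦ z - (z - α) * q z) (1 - q α) α := by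
  refine ((hasDerivAt_id' α).fun_sub
    (((hasDerivAt_id' α).sub_const α).fun_mul hq.hasDerivAt)).congr_deriv ?_
  simp

lemma deriv_nuOfPole_self {h : ℂ → ℂ} {α : ℂ} {m : ℕ} (hα : α ≠ 0) (hm : m ≠ 0)
    (hhα : h α ≠ 0) (hh : DifferentiableAt ℂ h α) (hh' : DifferentiableAt ℂ (deriv h) α) :
    deriv (nuOfPole h α m) α = 1 + 1 / (m * α) := by
  have hden : α * (deriv h α * (α - α) - m * h α) ≠ 0 := by simp [hα, hm, hhα]
  have hq : DifferentiableAt ℂ (fun z ↦ h z / (z * (deriv h z * (z - α) - m * h z))) α := by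
    refine hh.div ?_ hden
    fun_prop
  unfold nuOfPole
  rw [(hasDerivAt_sub_sub_mul hq).deriv]
  field_simp
  ring

lemma differentiableOn_nuOfPole {h : ℂ → ℂ} {α : ℂ} {m : ℕ} {s : Set ℂ}
    (hh : DifferentiableOn ℂ h s) (hh' : DifferentiableOn ℂ (deriv h) s)
    (hden : ∀ z ∈ s, z * (deriv h z * (z - α) - m * h z) ≠ 0) :
    DifferentiableOn ℂ (nuOfPole h α m) s := by
  unfold nuOfPole
  refine differentiableOn_id.sub ((differentiableOn_id.sub_const α).mul (hh.div ?_ hden))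
  fun_prop

lemma circleIntegral_sub_mul_inv_sub {G : ℂ → ℂ} {α c : ℂ} {r : ℝ} (hr : 0 < r)
    (hG : DifferentiableOn ℂ G (closedBall α r)) :
    (∮ z in C(α, r), (G z - c * (z - α)⁻¹)) = -(2 * Real.pi * I * c) := by
  have hG0 : (∮ z in C(α, r), G z) = 0 :=
    circleIntegral_eq_zero_of_differentiable_on_off_countable hr.le Set.countable_empty
      hG.continuousOn fun z hz ↦
        hG.differentiableAt (closedBall_mem_nhds_of_mem hz.1)
  have hinv : CircleIntegrable (fun z ↦ c * (z - α)⁻¹) α r :=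
    (continuousOn_const.mul ((continuousOn_id.sub continuousOn_const).inv₀ fun z hz ↦
      sub_ne_zero.mpr (ne_of_mem_sphere hz hr.ne'))).circleIntegrable hr.le
  have hGint : CircleIntegrable G α r :=
    (hG.continuousOn.mono sphere_subset_closedBall).circleIntegrable hr.le
  rw [circleIntegral.integral_sub hGint hinv, hG0, circleIntegral.integral_const_mul,
    circleIntegral.integral_sub_inv_of_mem_ball (mem_ball_self hr)]
  ring

lemma eventually_nuOfPole_denom_ne_zero {h : ℂ → ℂ} {α : ℂ} {m : ℕ} (hα : α ≠ 0)
    (hm : m ≠ 0) (hhα : h α ≠ 0) (hh : ContinuousAt h α) (hh' : ContinuousAt (deriv h) α) :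
    ∀ᶠ z in 𝓝 α, h z ≠ 0 ∧ z * (deriv h z * (z - α) - m * h z) ≠ 0 := by
  have hden : ContinuousAt (fun z ↦ z * (deriv h z * (z - α) - m * h z)) α := by fun_prop
  exact (hh.eventually_ne hhα).and (hden.eventually_ne (by simp [hα, hm, hhα]))

lemma circleIntegral_inv_sub_nu {g h : ℂ → ℂ} {α : ℂ} {m : ℕ} {r : ℝ} {s : Set ℂ}
    (hr : 0 < r) (hs : IsOpen s) (hrs : closedBall α r ⊆ s) (hh : DifferentiableOn ℂ h s)
    (hhs : ∀ z ∈ s, h z ≠ 0) (hg : ∀ z ∈ s, z ≠ α → g =ᶠ[𝓝 z] fun w ↦ h w / (w - α) ^ m) :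
    (∮ z in C(α, r), (z - nu g z)⁻¹) = -(2 * Real.pi * I * (m * α)) := by
  have hh' : DifferentiableOn ℂ (deriv h) s := (hh.analyticOnNhd hs).deriv.differentiableOn
  have hG : DifferentiableOn ℂ (fun z ↦ z * deriv h z / h z - m) (closedBall α r) :=
    ((differentiableOn_id.mul (hh'.mono hrs)).div (hh.mono hrs)
      fun z hz ↦ hhs z (hrs hz)).sub_const _
  have hlog : Set.EqOn (fun z ↦ (z - nu g z)⁻¹)
      (fun z ↦ z * deriv h z / h z - m - m * α * (z - α)⁻¹) (sphere α r) := fun z hz ↦ by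
    have hzs : z ∈ s := hrs (sphere_subset_closedBall hz)
    have hzα : z ≠ α := ne_of_mem_sphere hz hr.ne'
    exact sub_nu_inv_eq (hg z hzs hzα) (hh.differentiableAt (hs.mem_nhds hzs)) hzα (hhs z hzs)
  rw [circleIntegral.integral_congr hr.le hlog, circleIntegral_sub_mul_inv_sub hr hG]

/-- If `g` has a pole of order `m ≥ 1` at `α ≠ 0`, then `ν_g` has a removable singularity
at `α`; the holomorphic extension `F` satisfies `F α = α`, `F' α = 1 + 1/(mα)`, and the
holomorphic index of `ν_g` at `α` is `-mα`. -/
theorem nu_at_pole_of_order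
    (α : ℂ) (hα : α ≠ 0) (m : ℕ) (hm : 1 ≤ m)
    (g h : ℂ → ℂ) (U : Set ℂ) (hU : IsOpen U) (hαU : α ∈ U)
    (hh : DifferentiableOn ℂ h U) (hhα : h α ≠ 0)
    (hfact : ∀ z ∈ U \ {α}, g z = h z / (z - α) ^ m) :
    ∃ (F : ℂ → ℂ) (V : Set ℂ), IsOpen V ∧ α ∈ V ∧ DifferentiableOn ℂ F V ∧
      (∀ z ∈ V, z ≠ α → F z = nu g z) ∧
      F α = α ∧ deriv F α = 1 + 1 / (m * α) ∧
      ∃ r₀ > 0, ∀ r : ℝ, 0 < r → r < r₀ →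
        (2 * Real.pi * Complex.I)⁻¹ * (∮ z in C(α, r), (z - nu g z)⁻¹) = -(m * α) := by
  have hm₀ : m ≠ 0 := Nat.one_le_iff_ne_zero.mp hm
  have hUα : U ∈ 𝓝 α := hU.mem_nhds hαU
  have hh' : DifferentiableOn ℂ (deriv h) U := (hh.analyticOnNhd hU).deriv.differentiableOn
  have hg : ∀ z ∈ U, z ≠ α → g =ᶠ[𝓝 z] fun w ↦ h w / (w - α) ^ m := fun z hzU hz ↦
    eventually_of_mem ((hU.sdiff isClosed_singleton).mem_nhds ⟨hzU, hz⟩) hfact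
  obtain ⟨ε, hε, hball⟩ := Metric.mem_nhds_iff.mp <| Filter.Eventually.and hUα <|
    eventually_nuOfPole_denom_ne_zero hα hm₀ hhα (hh.differentiableAt hUα).continuousAt
      (hh'.differentiableAt hUα).continuousAt
  have hUball : ball α ε ⊆ U := fun z hz ↦ (hball hz).1
  refine ⟨nuOfPole h α m, ball α ε, isOpen_ball, mem_ball_self hε,
    differentiableOn_nuOfPole (hh.mono hUball) (hh'.mono hUball) fun z hz ↦ (hball hz).2.2,
    fun z hz hzα ↦ (nu_eq_nuOfPole (hg z (hUball hz) hzα)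
      (hh.differentiableAt (hU.mem_nhds (hUball hz))) hzα).symm,
    nuOfPole_self h α m, deriv_nuOfPole_self hα hm₀ hhα (hh.differentiableAt hUα)
      (hh'.differentiableAt hUα), ε, hε, fun r hr hrε ↦ ?_⟩
  rw [circleIntegral_inv_sub_nu hr isOpen_ball (closedBall_subset_ball hrε) (hh.mono hUball)
    (fun z hz ↦ (hball hz).2.1) (fun z hz hzα ↦ hg z (hUball hz) hzα), mul_neg,
    inv_mul_cancel_left₀ two_pi_I_ne_zero]
end

section
/- Every fixed point of ν_ζ off the critical strip S is repelling. Precisely: (i) if α ∈ ℂ with Re α ≤ 0 is a zero of ζ of order m ≥ 1, then the holomorphic extension F of ν_ζ(z) = z − ζ(z)/(z ζ'(z)) at α satisfies F(α) = α, F'(α) = 1 − 1/(mα), and |F'(α)| > 1; (ii) ν_ζ has a removable singularity at the pole z = 1 of ζ, and its holomorphic extension F there satisfies F(1) = 1 and F'(1) = 2, so |F'(1)| > 1. -/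
open Complex

/-- The nu function of the Riemann zeta function: `ν_ζ(z) = z - ζ(z)/(z ζ'(z))`. -/
noncomputable def nuZeta (z : ℂ) : ℂ := z - riemannZeta z / (z * deriv riemannZeta z)

/-!
Near a zero or pole `α ≠ 0` of order `m ≠ 0`, write `f = (z - α)^m g` with `g` holomorphic and
`g α ≠ 0`. Then `f / f' = (z - α) g / (m g + (z - α) g')`, so `ν_f` extends holomorphically by
`z - (z - α) g / (z (m g + (z - α) g'))`, which fixes `α` with multiplier `1 - 1/(mα)`.
A zero of `ζ` with `Re α ≤ 0` gives `Re (1/(mα)) ≤ 0`, hence multiplier of norm `> 1`; the pole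
at `1` is the case `m = -1`, `α = 1`, with multiplier `2`.
-/

open Set Filter Topology Function

noncomputable def nuMap (f : ℂ → ℂ) (z : ℂ) : ℂ := z - f z / (z * deriv f z)

theorem one_lt_norm_one_sub_inv {w : ℂ} (hw : w ≠ 0) (hre : w.re ≤ 0) : 1 < ‖1 - w⁻¹‖ := by
  have hinv_re : w⁻¹.re ≤ 0 := by
    rw [inv_re]
    exact div_nonpos_of_nonpos_of_nonneg hre (normSq_nonneg w)
  have hinv_pos : 0 < normSq w⁻¹ := normSq_pos.2 (inv_ne_zero hw)
  have hsq : ‖1 - w⁻¹‖ ^ 2 = (1 - w⁻¹.re) ^ 2 + w⁻¹.im ^ 2 := by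
    rw [Complex.sq_norm, normSq_apply]
    simp only [sub_re, one_re, sub_im, one_im]
    ring
  rw [normSq_apply] at hinv_pos
  nlinarith [norm_nonneg (1 - w⁻¹)]

theorem hasDerivAt_sub_sub_mul_div {N D : ℂ → ℂ} {α : ℂ} (hN : DifferentiableAt ℂ N α)
    (hD : DifferentiableAt ℂ D α) (hDα : D α ≠ 0) :
    HasDerivAt (fun z => z - (z - α) * N z / D z) (1 - N α / D α) α := by
  have h : HasDerivAt (fun z => z - (z - α) * N z / D z)
      (1 - ((1 * N α + (α - α) * deriv N α) * D α - (α - α) * N α * deriv D α) / D α ^ 2) α :=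
    (hasDerivAt_id α).sub ((((hasDerivAt_id α).sub_const α).mul hN.hasDerivAt).div
      hD.hasDerivAt hDα)
  refine h.congr_deriv ?_
  field_simp
  ring

theorem div_mul_deriv_eq_of_eventuallyEq_zpow_mul {f g : ℂ → ℂ} {α z : ℂ} (m : ℤ) (hz : z ≠ α)
    (hg : DifferentiableAt ℂ g z) (hf : f =ᶠ[𝓝 z] fun w => (w - α) ^ m * g w) :
    f z / (z * deriv f z) = (z - α) * g z / (z * (m * g z + (z - α) * deriv g z)) := by
  have hzα : z - α ≠ 0 := sub_ne_zero.2 hz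
  have hpow : HasDerivAt (fun w => (w - α) ^ m) (m * (z - α) ^ (m - 1)) z := by
    simpa using (hasDerivAt_zpow m (z - α) (Or.inl hzα)).comp_sub_const z α
  have hderiv : deriv f z = (z - α) ^ (m - 1) * (m * g z + (z - α) * deriv g z) := by
    have hprod : HasDerivAt (fun w => (w - α) ^ m * g w)
        (m * (z - α) ^ (m - 1) * g z + (z - α) ^ m * deriv g z) z := hpow.mul hg.hasDerivAt
    rw [hf.deriv_eq, hprod.deriv, zpow_sub_one₀ hzα]
    field_simp
  have hfz : f z = (z - α) ^ (m - 1) * ((z - α) * g z) := by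
    rw [hf.eq_of_nhds, zpow_sub_one₀ hzα]
    field_simp
  rw [hfz, hderiv, mul_left_comm z, mul_div_mul_left _ _ (zpow_ne_zero _ hzα)]

theorem exists_extension_nuMap_of_eq_zpow_mul {f g : ℂ → ℂ} {α : ℂ} {m : ℤ} {U : Set ℂ}
    (hα : α ≠ 0) (hm : m ≠ 0) (hU : IsOpen U) (hαU : α ∈ U) (hg : DifferentiableOn ℂ g U)
    (hgα : g α ≠ 0) (hf : ∀ z ∈ U, z ≠ α → f z = (z - α) ^ m * g z) :
    ∃ (F : ℂ → ℂ) (V : Set ℂ), IsOpen V ∧ α ∈ V ∧ DifferentiableOn ℂ F V ∧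
      (∀ z ∈ V, z ≠ α → F z = nuMap f z) ∧ F α = α ∧ deriv F α = 1 - 1 / (m * α) := by
  set D : ℂ → ℂ := fun z => z * (m * g z + (z - α) * deriv g z)
  have hD : DifferentiableOn ℂ D U := by
    have := hg.deriv hU
    fun_prop
  have hDα : D α ≠ 0 := by
    simp only [D, sub_self, zero_mul, add_zero]
    exact mul_ne_zero hα (mul_ne_zero (Int.cast_ne_zero.2 hm) hgα)
  set V := U ∩ D ⁻¹' {0}ᶜ
  have hVU : V ⊆ U := inter_subset_left
  have hDV : ∀ z ∈ V, D z ≠ 0 := fun z hz => hz.2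
  refine ⟨fun z => z - (z - α) * g z / D z, V,
    hD.continuousOn.isOpen_inter_preimage hU isOpen_compl_singleton, ⟨hαU, hDα⟩, ?_, ?_,
    by simp, ?_⟩
  · exact differentiableOn_id.sub
      (((differentiableOn_id.sub_const α).mul (hg.mono hVU)).div (hD.mono hVU) hDV)
  · intro z hzV hzα
    have hzU := hVU hzV
    have hfz : f =ᶠ[𝓝 z] fun w => (w - α) ^ m * g w := by
      filter_upwards [(hU.sdiff isClosed_singleton).mem_nhds ⟨hzU, hzα⟩] with w ⟨hwU, hwα⟩
      exact hf w hwU hwα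
    rw [nuMap, div_mul_deriv_eq_of_eventuallyEq_zpow_mul m hzα
      (hg.differentiableAt (hU.mem_nhds hzU)) hfz]
  · have hgD : g α / D α = 1 / (m * α) := by
      simp only [D, sub_self, zero_mul, add_zero]
      field_simp
    rw [(hasDerivAt_sub_sub_mul_div (hg.differentiableAt (hU.mem_nhds hαU))
      (hD.differentiableAt (hU.mem_nhds hαU)) hDα).deriv, hgD]

theorem differentiable_update_sub_one_mul_riemannZeta :
    Differentiable ℂ (update (fun s => (s - 1) * riemannZeta s) 1 1) := by
  have hne : ∀ z ≠ (1 : ℂ),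
      DifferentiableAt ℂ (update (fun s => (s - 1) * riemannZeta s) 1 1) z := by
    intro z hz
    refine ((differentiableAt_id.sub_const 1).mul
      (differentiableAt_riemannZeta hz)).congr_of_eventuallyEq ?_
    filter_upwards [isOpen_compl_singleton.mem_nhds hz] with w hw
    exact update_of_ne hw _ _
  intro z
  rcases eq_or_ne z 1 with rfl | hz
  · refine (analyticAt_of_differentiable_on_punctured_nhds_of_continuousAt
      (eventually_nhdsWithin_of_forall hne) ?_).differentiableAt
    rw [← continuousWithinAt_compl_self, ContinuousWithinAt, update_self]
    refine riemannZeta_residue_one.congr' ?_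
    filter_upwards [self_mem_nhdsWithin] with w hw
    rw [update_of_ne hw]
  · exact hne z hz

/-- Every fixed point of `ν_ζ` off the critical strip is repelling: (i) at a zero `α` of `ζ`
of order `m ≥ 1` with `Re α ≤ 0`, the holomorphic extension `F` of `ν_ζ` satisfies
`F α = α`, `F' α = 1 - 1/(mα)` and `|F' α| > 1`; (ii) at the pole `z = 1` of `ζ`, the
holomorphic extension `F` of `ν_ζ` satisfies `F 1 = 1` and `F' 1 = 2`, so `|F' 1| > 1`. -/
theorem nuZeta_repelling_off_critical_strip :
    (∀ (α : ℂ), α.re ≤ 0 → ∀ (m : ℕ), 1 ≤ m → ∀ (h : ℂ → ℂ) (U : Set ℂ),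
      IsOpen U → α ∈ U → DifferentiableOn ℂ h U → h α ≠ 0 →
      (∀ z ∈ U, riemannZeta z = (z - α) ^ m * h z) →
      ∃ (F : ℂ → ℂ) (V : Set ℂ), IsOpen V ∧ α ∈ V ∧ DifferentiableOn ℂ F V ∧
        (∀ z ∈ V, z ≠ α → F z = nuZeta z) ∧
        F α = α ∧ deriv F α = 1 - 1 / (m * α) ∧ 1 < ‖deriv F α‖) ∧
    (∃ (F : ℂ → ℂ) (V : Set ℂ), IsOpen V ∧ (1 : ℂ) ∈ V ∧ DifferentiableOn ℂ F V ∧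
      (∀ z ∈ V, z ≠ 1 → F z = nuZeta z) ∧
      F 1 = 1 ∧ deriv F 1 = 2 ∧ 1 < ‖deriv F 1‖) := by
  refine ⟨fun α hre m hm h U hU hαU hh hhα hζ => ?_, ?_⟩
  · have hα : α ≠ 0 := by
      rintro rfl
      have := hζ 0 hαU
      rw [riemannZeta_zero, zero_sub, neg_zero, zero_pow (by omega), zero_mul] at this
      norm_num at this
    obtain ⟨F, V, hV, hαV, hF, hFν, hFα, hF'⟩ :=
      exists_extension_nuMap_of_eq_zpow_mul (f := riemannZeta) (m := m) hα (by omega) hU hαU hh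
        hhα fun z hz _ => by rw [hζ z hz, zpow_natCast]
    push_cast at hF'
    have hmα_re : ((m : ℂ) * α).re ≤ 0 := by
      simpa using mul_nonpos_of_nonneg_of_nonpos m.cast_nonneg hre
    refine ⟨F, V, hV, hαV, hF, hFν, hFα, hF', ?_⟩
    rw [hF', one_div]
    exact one_lt_norm_one_sub_inv (mul_ne_zero (Nat.cast_ne_zero.2 (by omega)) hα) hmα_re
  · obtain ⟨F, V, hV, h1V, hF, hFν, hF1, hF'⟩ :=
      exists_extension_nuMap_of_eq_zpow_mul (f := riemannZeta) (m := -1) one_ne_zero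
        (by norm_num) isOpen_univ (mem_univ 1)
        differentiable_update_sub_one_mul_riemannZeta.differentiableOn (by simp) fun z _ hz => by
          rw [update_of_ne hz, zpow_neg_one, inv_mul_cancel_left₀ (sub_ne_zero.2 hz)]
    norm_num at hF'
    exact ⟨F, V, hV, h1V, hF, hFν, hF1, hF', by norm_num [hF']⟩
end

section
/- Assume the Riemann hypothesis. If α lies in the critical strip S, ζ(α) = 0, and ζ'(α) ≠ 0 (i.e. α is a simple zero), then α is an indifferent fixed point of ν_ζ whose multiplier is not 1: ν_ζ(α) = α, |ν_ζ'(α)| = 1, and ν_ζ'(α) ≠ 1. -/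
/-! At a zero `α` of `ζ`, every term of the quotient rule for `ζ/(z ζ')` that contains `ζ(α)`
vanishes, so a simple zero is fixed by `ν_ζ` with multiplier `1 - 1/α = (α - 1)/α`. This has
modulus `1` exactly when `α` is equidistant from `0` and `1`, i.e. on the critical line, which
is where RH puts `α`; and it is never `1`. -/

open Complex

theorem hasDerivAt_sub_div_mul_deriv {𝕜 : Type*} [NontriviallyNormedField 𝕜] {f : 𝕜 → 𝕜}
    {z : 𝕜} (hf : DifferentiableAt 𝕜 f z) (hf' : DifferentiableAt 𝕜 (deriv f) z)
    (hz : z ≠ 0) (hfz : f z = 0) (hf'z : deriv f z ≠ 0) :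
    HasDerivAt (fun w => w - f w / (w * deriv f w)) (1 - z⁻¹) z := by
  have hden : HasDerivAt (fun w => w * deriv f w)
      (1 * deriv f z + z * deriv (deriv f) z) z :=
    (hasDerivAt_id z).mul hf'.hasDerivAt
  refine ((hasDerivAt_id z).sub (hf.hasDerivAt.div hden (mul_ne_zero hz hf'z))).congr_deriv ?_
  rw [hfz]
  field_simp
  ring

theorem norm_one_sub_inv_of_re_eq_half {α : ℂ} (hre : α.re = 1 / 2) : ‖1 - α⁻¹‖ = 1 := by
  have hα : α ≠ 0 := fun h => by norm_num [h] at hre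
  have hconj : starRingEnd ℂ α = 1 - α := by
    apply Complex.ext <;> simp only [conj_re, conj_im, sub_re, sub_im, one_re, one_im] <;>
      linarith
  calc ‖1 - α⁻¹‖ = ‖1 - α‖ / ‖α‖ := by
        rw [norm_sub_rev 1 α, ← norm_div, sub_div, div_self hα, one_div]
    _ = 1 := by rw [← hconj, norm_conj, div_self (norm_ne_zero_iff.mpr hα)]

theorem hasDerivAt_nuZeta {α : ℂ} (hα₀ : α ≠ 0) (hα₁ : α ≠ 1) (hzero : riemannZeta α = 0)
    (hsimple : deriv riemannZeta α ≠ 0) : HasDerivAt nuZeta (1 - α⁻¹) α :=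
  hasDerivAt_sub_div_mul_deriv (differentiableAt_riemannZeta hα₁)
    (analyticOn_riemannZeta α hα₁).deriv.differentiableAt hα₀ hzero hsimple

/-- Under the Riemann hypothesis, every simple zero of `ζ` in the critical strip is an
indifferent fixed point of `ν_ζ` whose multiplier is not `1`. -/
theorem simple_zero_indifferent_of_RH
    (RH : ∀ s : ℂ, 0 < s.re → s.re < 1 → riemannZeta s = 0 → s.re = 1 / 2)
    (α : ℂ) (hα₀ : 0 < α.re) (hα₁ : α.re < 1)
    (hzero : riemannZeta α = 0) (hsimple : deriv riemannZeta α ≠ 0) :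
    nuZeta α = α ∧ ‖deriv nuZeta α‖ = 1 ∧ deriv nuZeta α ≠ 1 := by
  have hne0 : α ≠ 0 := fun h => by simp [h] at hα₀
  have hne1 : α ≠ 1 := fun h => by simp [h] at hα₁
  rw [(hasDerivAt_nuZeta hne0 hne1 hzero hsimple).deriv]
  refine ⟨by simp [nuZeta, hzero], norm_one_sub_inv_of_re_eq_half (RH α hα₀ hα₁ hzero), ?_⟩
  simpa using hne0
end

section
/- Suppose that for every zero α of ζ in the critical strip S, with order m (ζ(z) = (z−α)^m h(z), h(α) ≠ 0), one has |1 − 1/(mα)| = 1 (i.e. every fixed point of ν_ζ in S is indifferent). Then the Riemann hypothesis and the simplicity hypothesis hold: every zero of ζ in S satisfies Re α = 1/2 and has order m = 1. -/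
open Complex

/-!
A multiplier `1 - 1/w` has modulus one exactly when `w` is equidistant from `0` and `1`, i.e.
`Re w = 1/2`. So an indifferent zero `α` of order `m` satisfies `m · Re α = 1/2`, whence
`Re α ≤ 1/2`. By the functional equation `1 - α` is again a zero in the strip, and the same
argument gives `Re (1 - α) ≤ 1/2`. Hence `Re α = 1/2`, and then `m · Re α = 1/2` forces `m = 1`.
-/

lemma re_eq_half_of_norm_one_sub_one_div_eq_one {w : ℂ} (hw : w ≠ 0) (h : ‖1 - 1 / w‖ = 1) :
    w.re = 1 / 2 := by
  have hdist : ‖w - 1‖ = ‖w‖ := by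
    rwa [one_sub_div hw, norm_div, div_eq_one_iff_eq (norm_ne_zero_iff.mpr hw)] at h
  have hsq : normSq (w - 1) = normSq w := by
    rw [← Complex.sq_norm, ← Complex.sq_norm, hdist]
  simp only [normSq_apply, sub_re, sub_im, one_re, one_im, sub_zero] at hsq
  linarith

lemma natCast_mul_re_eq_half_of_norm_one_sub_one_div_eq_one {m : ℕ} {α : ℂ} (hm : 1 ≤ m)
    (hα : α ≠ 0) (h : ‖1 - 1 / (m * α)‖ = 1) : (m : ℝ) * α.re = 1 / 2 := by
  have hmα : (m : ℂ) * α ≠ 0 := mul_ne_zero (Nat.cast_ne_zero.mpr (by omega)) hα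
  simpa using re_eq_half_of_norm_one_sub_one_div_eq_one hmα h

lemma eq_half_of_mul_eq_half_of_mul_one_sub_eq_half {x a b : ℝ} (ha : 1 ≤ a) (hb : 1 ≤ b)
    (h : a * x = 1 / 2) (h' : b * (1 - x) = 1 / 2) : x = 1 / 2 := by
  nlinarith

lemma AnalyticAt.exists_pow_mul_of_analyticOrderAt_ne_top {f : ℂ → ℂ} {α : ℂ}
    (hf : AnalyticAt ℂ f α) (hord : analyticOrderAt f α ≠ ⊤) (hfα : f α = 0) :
    ∃ (m : ℕ) (h : ℂ → ℂ) (U : Set ℂ), 1 ≤ m ∧ IsOpen U ∧ α ∈ U ∧ DifferentiableOn ℂ h U ∧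
      h α ≠ 0 ∧ ∀ z ∈ U, f z = (z - α) ^ m * h z := by
  obtain ⟨g, hg, hgα, hfg⟩ := hf.analyticOrderAt_ne_top.mp hord
  have hm : analyticOrderNatAt f α ≠ 0 := by
    rw [← Nat.cast_ne_zero (R := ℕ∞), Nat.cast_analyticOrderNatAt hord]
    exact analyticOrderAt_ne_zero.mpr ⟨hf, hfα⟩
  obtain ⟨U, hU, hUopen, hαU⟩ :=
    mem_nhds_iff.mp (hg.eventually_analyticAt.and hfg)
  exact ⟨_, g, U, Nat.one_le_iff_ne_zero.mpr hm, hUopen, hαU,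
    fun z hz => (hU hz).1.differentiableAt.differentiableWithinAt, hgα,
    fun z hz => by simpa using (hU hz).2⟩

lemma analyticOrderAt_riemannZeta_ne_top {s : ℂ} (hs : s ≠ 1) :
    analyticOrderAt riemannZeta s ≠ ⊤ := by
  have hζ2 : analyticOrderAt riemannZeta 2 = 0 :=
    (analyticOn_riemannZeta 2 (by norm_num)).analyticOrderAt_eq_zero.mpr
      (riemannZeta_ne_zero_of_one_le_re (by norm_num))
  exact analyticOn_riemannZeta.analyticOrderAt_ne_top_of_isPreconnected (x := 2)
    (isConnected_compl_singleton_of_one_lt_rank (by simp) 1).isPreconnected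
    (by norm_num) hs (by simp [hζ2])

lemma riemannZeta_one_sub_eq_zero {s : ℂ} (hs : 0 < s.re) (hs1 : s ≠ 1)
    (hζ : riemannZeta s = 0) : riemannZeta (1 - s) = 0 := by
  have hs_ne : ∀ n : ℕ, s ≠ -n := fun n hn => by
    have : s.re = -n := by simp [hn]
    linarith [(Nat.cast_nonneg n : (0 : ℝ) ≤ n)]
  rw [riemannZeta_one_sub hs_ne hs1, hζ, mul_zero]

/-- If every fixed point of `ν_ζ` in the critical strip is indifferent (i.e. every zero
`α` of `ζ` in the strip, of order `m`, satisfies `|1 - 1/(mα)| = 1`), then the Riemann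
hypothesis and the simplicity hypothesis hold: every zero of `ζ` in the strip has real
part `1/2` and order `1`. -/
theorem RH_and_simplicity_of_indifferent
    (hyp : ∀ (α : ℂ), 0 < α.re → α.re < 1 → ∀ (m : ℕ), 1 ≤ m →
      ∀ (h : ℂ → ℂ) (U : Set ℂ), IsOpen U → α ∈ U → DifferentiableOn ℂ h U → h α ≠ 0 →
      (∀ z ∈ U, riemannZeta z = (z - α) ^ m * h z) →
      ‖1 - 1 / (m * α)‖ = 1) :
    ∀ (α : ℂ), 0 < α.re → α.re < 1 → riemannZeta α = 0 →
      α.re = 1 / 2 ∧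
      ∀ (m : ℕ), 1 ≤ m → ∀ (h : ℂ → ℂ) (U : Set ℂ), IsOpen U → α ∈ U →
        DifferentiableOn ℂ h U → h α ≠ 0 →
        (∀ z ∈ U, riemannZeta z = (z - α) ^ m * h z) → m = 1 := by
  have order_mul_re : ∀ (β : ℂ), 0 < β.re → β.re < 1 → ∀ (m : ℕ), 1 ≤ m →
      ∀ (h : ℂ → ℂ) (U : Set ℂ), IsOpen U → β ∈ U → DifferentiableOn ℂ h U → h β ≠ 0 →
      (∀ z ∈ U, riemannZeta z = (z - β) ^ m * h z) → (m : ℝ) * β.re = 1 / 2 :=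
    fun β h0 h1 m hm h U hU hβU hh hhβ hfac =>
      natCast_mul_re_eq_half_of_norm_one_sub_one_div_eq_one hm (by rintro rfl; simp at h0)
        (hyp β h0 h1 m hm h U hU hβU hh hhβ hfac)
  have exists_order : ∀ β : ℂ, 0 < β.re → β.re < 1 → riemannZeta β = 0 →
      ∃ m : ℕ, 1 ≤ m ∧ (m : ℝ) * β.re = 1 / 2 := by
    intro β h0 h1 hζ
    have hβ1 : β ≠ 1 := by rintro rfl; simp at h1
    obtain ⟨m, h, U, hm, hU, hβU, hh, hhβ, hfac⟩ :=
      (analyticOn_riemannZeta β hβ1).exists_pow_mul_of_analyticOrderAt_ne_top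
        (analyticOrderAt_riemannZeta_ne_top hβ1) hζ
    exact ⟨m, hm, order_mul_re β h0 h1 m hm h U hU hβU hh hhβ hfac⟩
  intro α h0 h1 hζ
  have hα1 : α ≠ 1 := by rintro rfl; simp at h1
  obtain ⟨m, hm, hα⟩ := exists_order α h0 h1 hζ
  obtain ⟨m', hm', hα'⟩ := exists_order (1 - α) (by simpa using h1) (by simpa using h0)
    (riemannZeta_one_sub_eq_zero h0 hα1 hζ)
  have hhalf : α.re = 1 / 2 :=
    eq_half_of_mul_eq_half_of_mul_one_sub_eq_half (Nat.one_le_cast.mpr hm)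
      (Nat.one_le_cast.mpr hm') hα (by simpa using hα')
  refine ⟨hhalf, fun n hn h U hU hαU hh hhα hfac => ?_⟩
  have hn_half := order_mul_re α h0 h1 n hn h U hU hαU hh hhα hfac
  rw [hhalf] at hn_half
  exact_mod_cast (by linarith : (n : ℝ) = 1)
end

section
/- Let ξ(z) = (1/2) z (1−z) π^{−z/2} Γ(z/2) ζ(z) be the Riemann xi function (an entire function whose zeros are exactly the zeros of ζ in the critical strip S, with the same orders). The following are equivalent: (a') every zero of ζ in S has real part 1/2 and is simple; (b') every zero α of ξ, of order m, satisfies |1 − 1/(mα)| = 1, i.e. all fixed points of ν_ξ(z) = z − ξ(z)/(z ξ'(z)) are indifferent; (c') every zero α of ξ, of order m, satisfies |1 − 1/(mα)| ≥ 1, i.e. ν_ξ has no attracting fixed point. -/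
open Complex

/-- The Riemann xi function: `ξ(z) = (1/2) z (1-z) π^(-z/2) Γ(z/2) ζ(z)`. -/
noncomputable def riemannXi (z : ℂ) : ℂ :=
  (1 / 2) * z * (1 - z) * (Real.pi : ℂ) ^ (-z / 2) * Complex.Gamma (z / 2) * riemannZeta z

/-- The nu function of the Riemann xi function: `ν_ξ(z) = z - ξ(z)/(z ξ'(z))`. -/
noncomputable def nuXi (z : ℂ) : ℂ := z - riemannXi z / (z * deriv riemannXi z)

/-!
Away from the junk values at `0`, `1` and the trivial zeros, `riemannXi` agrees with the entire
function `ξ₀(z) = (z (1 - z) Λ₀(z) - 1) / 2`, where `Λ₀ = completedRiemannZeta₀`. In the critical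
strip `ξ₀` is `ζ` times a nonvanishing holomorphic factor, and `ξ₀` does not vanish on `Re z ≥ 1`,
hence by `ξ₀(1 - z) = ξ₀(z)` nowhere outside the strip. So the zeros of `ξ` are the zeros of `ζ`
in the strip, with the same orders, and `1 - α` is a zero of the same order as `α`.

Since `1 - 1/w = (w - 1)/w` and `|w - 1|² = |w|² - 2 Re w + 1`, the inequality `|1 - 1/(mα)| ≥ 1`
says `m Re α ≤ 1/2`, and `|1 - 1/(mα)| = 1` says `m Re α = 1/2`. Applied to `α` and `1 - α`
this gives `m Re α ≤ 1/2` and `m (1 - Re α) ≤ 1/2`, which force `m = 1` and `Re α = 1/2`.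
-/

open Filter Set Topology

lemma sq_norm_sub_one (w : ℂ) : ‖w - 1‖ ^ 2 = ‖w‖ ^ 2 - 2 * w.re + 1 := by
  simp only [Complex.sq_norm, normSq_apply, sub_re, sub_im, one_re, one_im]
  ring

lemma norm_one_sub_inv {w : ℂ} (hw : w ≠ 0) : ‖1 - w⁻¹‖ = ‖w - 1‖ / ‖w‖ := by
  rw [← norm_div, sub_div, div_self hw, one_div]

lemma one_le_norm_one_sub_inv_iff {w : ℂ} (hw : w ≠ 0) : 1 ≤ ‖1 - w⁻¹‖ ↔ w.re ≤ 1 / 2 := by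
  rw [norm_one_sub_inv hw, one_le_div (norm_pos_iff.mpr hw),
    ← sq_le_sq₀ (norm_nonneg _) (norm_nonneg _), sq_norm_sub_one]
  constructor <;> intro h <;> linarith

lemma norm_one_sub_inv_eq_one_iff {w : ℂ} (hw : w ≠ 0) : ‖1 - w⁻¹‖ = 1 ↔ w.re = 1 / 2 := by
  rw [norm_one_sub_inv hw, div_eq_one_iff_eq (norm_ne_zero_iff.mpr hw),
    ← sq_eq_sq₀ (norm_nonneg _) (norm_nonneg _), sq_norm_sub_one]
  constructor <;> intro h <;> linarith

lemma Differentiable.eventually_ne_zero_nhdsNE {g : ℂ → ℂ} (hg : Differentiable ℂ g) {z₁ : ℂ}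
    (hz₁ : g z₁ ≠ 0) (α : ℂ) : ∀ᶠ z in 𝓝[≠] α, g z ≠ 0 :=
  (hg.analyticAt α).eventually_eq_zero_or_eventually_ne_zero.resolve_left fun h =>
    hz₁ (AnalyticOnNhd.eqOn_zero_of_preconnected_of_eventuallyEq_zero (fun z _ => hg.analyticAt z)
      isPreconnected_univ (mem_univ α) h (mem_univ z₁))

def HasFactorizationAt (f : ℂ → ℂ) (α : ℂ) (m : ℕ) : Prop :=
  ∃ (h : ℂ → ℂ) (U : Set ℂ), IsOpen U ∧ α ∈ U ∧ DifferentiableOn ℂ h U ∧ h α ≠ 0 ∧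
    ∀ z ∈ U, f z = (z - α) ^ m * h z

lemma hasFactorizationAt_iff {f : ℂ → ℂ} {α : ℂ} {m : ℕ} :
    HasFactorizationAt f α m ↔
      ∃ g : ℂ → ℂ, AnalyticAt ℂ g α ∧ g α ≠ 0 ∧ ∀ᶠ z in 𝓝 α, f z = (z - α) ^ m • g z := by
  constructor
  · rintro ⟨h, U, hU, hαU, hh, hhα, hf⟩
    exact ⟨h, hh.analyticAt (hU.mem_nhds hαU), hhα, eventually_of_mem (hU.mem_nhds hαU) hf⟩
  · rintro ⟨g, hg, hgα, hf⟩
    obtain ⟨U, hUf, hU, hαU⟩ := eventually_nhds_iff.mp (hf.and hg.eventually_analyticAt)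
    exact ⟨g, U, hU, hαU, fun z hz => (hUf z hz).2.differentiableAt.differentiableWithinAt,
      hgα, fun z hz => (hUf z hz).1⟩

lemma analyticAt_Gammaℝ {z : ℂ} (hz : Gammaℝ z ≠ 0) : AnalyticAt ℂ Gammaℝ z := by
  have h := (differentiable_Gammaℝ_inv.analyticAt z).inv (inv_ne_zero hz)
  rwa [show (fun s => (Gammaℝ s)⁻¹)⁻¹ = Gammaℝ from funext fun s => inv_inv _] at h

lemma Gammaℝ_zero : Gammaℝ 0 = 0 := Gammaℝ_eq_zero_iff.mpr ⟨0, by simp⟩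

noncomputable def riemannXi₀ (z : ℂ) : ℂ := (z * (1 - z) * completedRiemannZeta₀ z - 1) / 2

lemma differentiable_riemannXi₀ : Differentiable ℂ riemannXi₀ := by
  unfold riemannXi₀
  have := differentiable_completedZeta₀
  fun_prop

lemma riemannXi₀_one_sub (z : ℂ) : riemannXi₀ (1 - z) = riemannXi₀ z := by
  simp only [riemannXi₀, completedRiemannZeta₀_one_sub]
  ring

lemma riemannXi₀_one : riemannXi₀ 1 = -1 / 2 := by
  simp [riemannXi₀]

noncomputable def xiFactor (z : ℂ) : ℂ := 1 / 2 * z * (1 - z) * Gammaℝ z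

lemma riemannXi_eq_xiFactor_mul (z : ℂ) : riemannXi z = xiFactor z * riemannZeta z := by
  rw [riemannXi, xiFactor, Gammaℝ_def]
  ring

lemma xiFactor_ne_zero {z : ℂ} (hz : 0 < z.re) (h1 : z ≠ 1) : xiFactor z ≠ 0 := by
  have h0 : z ≠ 0 := by rintro rfl; simp at hz
  exact mul_ne_zero (mul_ne_zero (mul_ne_zero (by norm_num) h0) (sub_ne_zero.mpr h1.symm))
    (Gammaℝ_ne_zero_of_re_pos hz)

lemma analyticAt_xiFactor {z : ℂ} (hz : 0 < z.re) : AnalyticAt ℂ xiFactor z := by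
  have := analyticAt_Gammaℝ (Gammaℝ_ne_zero_of_re_pos hz)
  unfold xiFactor
  fun_prop

lemma riemannXi_eq_riemannXi₀ {z : ℂ} (hG : Gammaℝ z ≠ 0) (h1 : z ≠ 1) :
    riemannXi z = riemannXi₀ z := by
  have h0 : z ≠ 0 := by rintro rfl; exact hG Gammaℝ_zero
  have h1' : 1 - z ≠ 0 := sub_ne_zero.mpr h1.symm
  rw [riemannXi_eq_xiFactor_mul, xiFactor, riemannZeta_def_of_ne_zero h0, completedRiemannZeta_eq,
    riemannXi₀]
  field_simp
  ring

lemma riemannXi_eventuallyEq_nhdsNE (α : ℂ) : riemannXi =ᶠ[𝓝[≠] α] riemannXi₀ := by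
  have hG : ∀ᶠ z in 𝓝[≠] α, (Gammaℝ z)⁻¹ ≠ 0 :=
    differentiable_Gammaℝ_inv.eventually_ne_zero_nhdsNE (z₁ := 1) (by simp [Gammaℝ_one]) α
  have h1 : ∀ᶠ z in 𝓝[≠] α, z ≠ 1 := by
    rcases eq_or_ne α 1 with rfl | hα
    · exact self_mem_nhdsWithin
    · exact nhdsWithin_le_nhds (isOpen_ne.mem_nhds hα)
  filter_upwards [hG, h1] with z hz hz1
  exact riemannXi_eq_riemannXi₀ (fun h => hz (by rw [h, inv_zero])) hz1

lemma riemannXi_eventuallyEq_nhds {α : ℂ} (h0 : 0 < α.re) (h1 : α ≠ 1) :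
    riemannXi =ᶠ[𝓝 α] riemannXi₀ := by
  filter_upwards [(continuous_re.isOpen_preimage _ isOpen_Ioi).mem_nhds h0,
    isOpen_ne.mem_nhds h1] with z hz hz1
  exact riemannXi_eq_riemannXi₀ (Gammaℝ_ne_zero_of_re_pos hz) hz1

lemma riemannXi₀_ne_zero_of_one_le_re {z : ℂ} (hz : 1 ≤ z.re) : riemannXi₀ z ≠ 0 := by
  rcases eq_or_ne z 1 with rfl | h1
  · simp [riemannXi₀_one]
  have h0 : 0 < z.re := by linarith
  rw [← riemannXi_eq_riemannXi₀ (Gammaℝ_ne_zero_of_re_pos h0) h1, riemannXi_eq_xiFactor_mul]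
  exact mul_ne_zero (xiFactor_ne_zero h0 h1) (riemannZeta_ne_zero_of_one_le_re hz)

lemma re_mem_Ioo_of_riemannXi₀_eq_zero {z : ℂ} (hz : riemannXi₀ z = 0) : 0 < z.re ∧ z.re < 1 := by
  constructor
  · by_contra! h
    refine riemannXi₀_ne_zero_of_one_le_re (z := 1 - z) (by rw [sub_re, one_re]; linarith) ?_
    rwa [riemannXi₀_one_sub]
  · by_contra! h
    exact riemannXi₀_ne_zero_of_one_le_re h hz

lemma analyticAt_riemannZeta {z : ℂ} (h1 : z ≠ 1) : AnalyticAt ℂ riemannZeta z :=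
  analyticOn_riemannZeta z h1

lemma analyticOrderAt_riemannXi₀_eq {α : ℂ} (h0 : 0 < α.re) (h1 : α.re < 1) :
    analyticOrderAt riemannXi₀ α = analyticOrderAt riemannZeta α := by
  have hα1 : α ≠ 1 := by rintro rfl; simp at h1
  have hmul : riemannXi₀ =ᶠ[𝓝 α] xiFactor * riemannZeta :=
    (riemannXi_eventuallyEq_nhds h0 hα1).symm.trans (.of_forall riemannXi_eq_xiFactor_mul)
  rw [analyticOrderAt_congr hmul,
    analyticOrderAt_mul (analyticAt_xiFactor h0) (analyticAt_riemannZeta hα1),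
    (analyticAt_xiFactor h0).analyticOrderAt_eq_zero.mpr (xiFactor_ne_zero h0 hα1), zero_add]

lemma analyticOrderAt_riemannXi₀_ne_top (α : ℂ) : analyticOrderAt riemannXi₀ α ≠ ⊤ := by
  have hone : analyticOrderAt riemannXi₀ 1 = 0 :=
    (differentiable_riemannXi₀.analyticAt 1).analyticOrderAt_eq_zero.mpr (by simp [riemannXi₀_one])
  exact AnalyticOnNhd.analyticOrderAt_ne_top_of_isPreconnected
    (fun z _ => differentiable_riemannXi₀.analyticAt z) isPreconnected_univ (mem_univ 1)
    (mem_univ α) (by simp [hone])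

lemma hasFactorizationAt_riemannXi_iff {α : ℂ} {m : ℕ} (hm : 0 < m) :
    HasFactorizationAt riemannXi α m ↔ analyticOrderAt riemannXi₀ α = m := by
  have hξ₀ := differentiable_riemannXi₀.analyticAt α
  rw [hasFactorizationAt_iff, hξ₀.analyticOrderAt_eq_natCast]
  refine exists_congr fun g => and_congr_right fun hg => and_congr_right fun _ => ?_
  have hcont : ContinuousAt (fun z => (z - α) ^ m • g z) α := by
    have := hg.continuousAt
    fun_prop
  constructor
  · intro hf
    exact (hξ₀.continuousAt.eventuallyEq_nhds_iff_eventuallyEq_nhdsNE hcont).mp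
      ((riemannXi_eventuallyEq_nhdsNE α).symm.trans (hf.filter_mono nhdsWithin_le_nhds))
  · intro hf
    have hzero : riemannXi₀ α = 0 := by simpa [hm.ne'] using hf.self_of_nhds
    obtain ⟨h0, h1⟩ := re_mem_Ioo_of_riemannXi₀_eq_zero hzero
    exact (riemannXi_eventuallyEq_nhds h0 (by rintro rfl; simp at h1)).trans hf

lemma analyticOrderAt_riemannXi₀_one_sub (α : ℂ) :
    analyticOrderAt riemannXi₀ (1 - α) = analyticOrderAt riemannXi₀ α := by
  have h := analyticOrderAt_comp_of_deriv_ne_zero (f := riemannXi₀) (g := fun z => 1 - z) (z₀ := α)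
    (by fun_prop) (by simp)
  rwa [show riemannXi₀ ∘ (fun z => 1 - z) = riemannXi₀ from funext riemannXi₀_one_sub, eq_comm] at h

lemma AnalyticAt.analyticOrderAt_eq_one_iff {𝕜 E : Type*} [NontriviallyNormedField 𝕜] [CharZero 𝕜]
    [NormedAddCommGroup E] [NormedSpace 𝕜 E] [CompleteSpace E] {f : 𝕜 → E} {z : 𝕜}
    (hf : AnalyticAt 𝕜 f z) (hz : f z = 0) : analyticOrderAt f z = 1 ↔ deriv f z ≠ 0 :=
  ⟨fun h => hf.deriv.analyticOrderAt_eq_zero.mp (analyticOrderAt_deriv_of_pos hf (n := 0) h),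
    hf.analyticOrderAt_eq_one_of_zero_deriv_ne_zero hz⟩

lemma hasFactorizationAt_riemannXi_iff_riemannZeta {α : ℂ} {m : ℕ} (hm : 0 < m) :
    HasFactorizationAt riemannXi α m ↔
      (0 < α.re ∧ α.re < 1) ∧ analyticOrderAt riemannZeta α = m := by
  rw [hasFactorizationAt_riemannXi_iff hm]
  constructor
  · intro hord
    have hzero : riemannXi₀ α = 0 :=
      (differentiable_riemannXi₀.analyticAt α).analyticOrderAt_ne_zero.mp
        (by rw [hord]; exact_mod_cast hm.ne')
    obtain ⟨h0, h1⟩ := re_mem_Ioo_of_riemannXi₀_eq_zero hzero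
    exact ⟨⟨h0, h1⟩, analyticOrderAt_riemannXi₀_eq h0 h1 ▸ hord⟩
  · rintro ⟨⟨h0, h1⟩, hord⟩
    rwa [analyticOrderAt_riemannXi₀_eq h0 h1]

def RiemannHypothesisWithSimpleZeros : Prop :=
  ∀ α : ℂ, 0 < α.re → α.re < 1 → riemannZeta α = 0 → α.re = 1 / 2 ∧ deriv riemannZeta α ≠ 0

lemma RiemannHypothesisWithSimpleZeros.norm_one_sub_one_div_eq_one
    (hRH : RiemannHypothesisWithSimpleZeros)
    {α : ℂ} {m : ℕ} (hm : 0 < m) (hf : HasFactorizationAt riemannXi α m) :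
    ‖1 - 1 / (m * α)‖ = 1 := by
  obtain ⟨⟨h0, h1⟩, hord⟩ := (hasFactorizationAt_riemannXi_iff_riemannZeta hm).mp hf
  have hζ := analyticAt_riemannZeta (z := α) (by rintro rfl; simp at h1)
  have hzero : riemannZeta α = 0 :=
    hζ.analyticOrderAt_ne_zero.mp (by rw [hord]; exact_mod_cast hm.ne')
  obtain ⟨hre, hderiv⟩ := hRH α h0 h1 hzero
  have hm1 : m = 1 := by
    exact_mod_cast hord.symm.trans ((hζ.analyticOrderAt_eq_one_iff hzero).mpr hderiv)
  have hα : α ≠ 0 := by rintro rfl; simp at h0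
  rw [hm1, Nat.cast_one, one_mul, one_div, norm_one_sub_inv_eq_one_iff hα, hre]

lemma natCast_mul_re_le_half_of_one_le_norm
    (hC : ∀ (α : ℂ) (m : ℕ), 0 < m → HasFactorizationAt riemannXi α m → 1 ≤ ‖1 - 1 / (m * α)‖)
    {β : ℂ} {m : ℕ} (hm : 0 < m) (hβ : analyticOrderAt riemannXi₀ β = m) :
    (m : ℝ) * β.re ≤ 1 / 2 := by
  have hfac := (hasFactorizationAt_riemannXi_iff hm).mpr hβ
  obtain ⟨⟨h0, -⟩, -⟩ := (hasFactorizationAt_riemannXi_iff_riemannZeta hm).mp hfac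
  have hβ0 : β ≠ 0 := by rintro rfl; simp at h0
  have h := hC β m hm hfac
  rw [one_div, one_le_norm_one_sub_inv_iff (mul_ne_zero (by exact_mod_cast hm.ne') hβ0)] at h
  simpa only [mul_re, natCast_re, natCast_im, zero_mul, sub_zero] using h

lemma RiemannHypothesisWithSimpleZeros.of_one_le_norm_one_sub_one_div
    (hC : ∀ (α : ℂ) (m : ℕ), 0 < m → HasFactorizationAt riemannXi α m → 1 ≤ ‖1 - 1 / (m * α)‖) :
    RiemannHypothesisWithSimpleZeros := by
  intro α h0 h1 hζ
  have hζ_an := analyticAt_riemannZeta (z := α) (by rintro rfl; simp at h1)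
  obtain ⟨m, hm⟩ := ENat.ne_top_iff_exists.mp (analyticOrderAt_riemannXi₀_ne_top α)
  have hord : analyticOrderAt riemannZeta α = m := by
    rw [← analyticOrderAt_riemannXi₀_eq h0 h1, hm]
  have hm0 : 0 < m := Nat.pos_of_ne_zero fun h => by
    simp [h, hζ_an.analyticOrderAt_eq_zero, hζ] at hord
  -- the zero `1 - α` has the same order `m`
  have hα := natCast_mul_re_le_half_of_one_le_norm hC hm0 hm.symm
  have hα' := natCast_mul_re_le_half_of_one_le_norm hC hm0
    (β := 1 - α) (by rw [analyticOrderAt_riemannXi₀_one_sub, hm])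
  simp only [sub_re, one_re] at hα'
  have hm1 : m = 1 := le_antisymm (by exact_mod_cast (by linarith : (m : ℝ) ≤ 1)) hm0
  subst hm1
  simp only [Nat.cast_one, one_mul] at hα hα' hord
  exact ⟨by linarith, (hζ_an.analyticOrderAt_eq_one_iff hζ).mp hord⟩

/-- The following are equivalent:
(a') every zero of `ζ` in the critical strip has real part `1/2` and is simple;
(b') every zero `α` of `ξ`, of order `m`, satisfies `|1 - 1/(mα)| = 1`, i.e. all fixed
points of `ν_ξ` are indifferent;
(c') every zero `α` of `ξ`, of order `m`, satisfies `|1 - 1/(mα)| ≥ 1`, i.e. `ν_ξ` has no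
attracting fixed point. -/
theorem RH_simplicity_iff_xi_indifferent_iff_xi_no_attracting :
    ((∀ (α : ℂ), 0 < α.re → α.re < 1 → riemannZeta α = 0 →
        α.re = 1 / 2 ∧ deriv riemannZeta α ≠ 0) ↔
      (∀ (α : ℂ) (m : ℕ), 1 ≤ m →
        ∀ (h : ℂ → ℂ) (U : Set ℂ), IsOpen U → α ∈ U → DifferentiableOn ℂ h U → h α ≠ 0 →
        (∀ z ∈ U, riemannXi z = (z - α) ^ m * h z) →
        ‖1 - 1 / (m * α)‖ = 1)) ∧
    ((∀ (α : ℂ), 0 < α.re → α.re < 1 → riemannZeta α = 0 →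
        α.re = 1 / 2 ∧ deriv riemannZeta α ≠ 0) ↔
      (∀ (α : ℂ) (m : ℕ), 1 ≤ m →
        ∀ (h : ℂ → ℂ) (U : Set ℂ), IsOpen U → α ∈ U → DifferentiableOn ℂ h U → h α ≠ 0 →
        (∀ z ∈ U, riemannXi z = (z - α) ^ m * h z) →
        1 ≤ ‖1 - 1 / (m * α)‖)) := by
  have RH_iff_indifferent : RiemannHypothesisWithSimpleZeros ↔
      ∀ (α : ℂ) (m : ℕ), 1 ≤ m → HasFactorizationAt riemannXi α m → ‖1 - 1 / (m * α)‖ = 1 :=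
    ⟨fun hRH _ _ hm => hRH.norm_one_sub_one_div_eq_one hm,
      fun hB => .of_one_le_norm_one_sub_one_div fun α m hm hf => (hB α m hm hf).ge⟩
  have RH_iff_no_attracting : RiemannHypothesisWithSimpleZeros ↔
      ∀ (α : ℂ) (m : ℕ), 1 ≤ m → HasFactorizationAt riemannXi α m → 1 ≤ ‖1 - 1 / (m * α)‖ :=
    ⟨fun hRH _ _ hm hf => (hRH.norm_one_sub_one_div_eq_one hm hf).ge,
      .of_one_le_norm_one_sub_one_div⟩
  simp only [HasFactorizationAt, forall_exists_index, and_imp] at *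
  exact ⟨RH_iff_indifferent, RH_iff_no_attracting⟩
end

section
/- Let γ ∈ ℝ, γ ≠ 0, and suppose α = 1/2 + γi is a simple zero of ζ (ζ(α) = 0, ζ'(α) ≠ 0). Then α is an indifferent fixed point of ν_ζ(z) = z − ζ(z)/(z ζ'(z)) with multiplier ν_ζ'(α) = e^{2πiθ}, where θ = (1/π) arctan(1/(2γ)); equivalently, γ = 1/(2 tan(πθ)). -/
/- At a simple zero `α ≠ 0` of `f`, the quotient rule applied to `f z / (z f'(z))` at `α` leaves
only `f'(α) · α f'(α) / (α f'(α))² = 1/α`, because `f α = 0` kills the other term. On the critical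
line `α = 1/2 + γi`, so `1 - 1/α = (i - x)/(i + x)` with `x = 1/(2γ)` real, which is
`e^{2i arctan x}`: for `x = tan t` one has `i - x = i e^{it}/cos t` and `i + x = i e^{-it}/cos t`. -/

open Complex

theorem hasDerivAt_nu_of_simple_zero {𝕜 : Type*} [NontriviallyNormedField 𝕜] {f : 𝕜 → 𝕜}
    {α : 𝕜} (hf' : DifferentiableAt 𝕜 (deriv f) α)
    (hzero : f α = 0) (hsimple : deriv f α ≠ 0) (hα : α ≠ 0) :
    HasDerivAt (fun z => z - f z / (z * deriv f z)) (1 - 1 / α) α := by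
  have hquot := (differentiableAt_of_deriv_ne_zero hsimple).hasDerivAt.div
    ((hasDerivAt_id α).mul hf'.hasDerivAt) (mul_ne_zero hα hsimple)
  refine ((hasDerivAt_id α).sub hquot).congr_deriv ?_
  simp only [hzero, Pi.mul_apply, id, zero_mul, sub_zero]
  field_simp

theorem differentiableAt_deriv_riemannZeta {s : ℂ} (hs : s ≠ 1) :
    DifferentiableAt ℂ (deriv riemannZeta) s :=
  (DifferentiableOn.deriv (s := {1}ᶜ)
    (fun _ hz => (differentiableAt_riemannZeta hz).differentiableWithinAt)
    isOpen_compl_singleton).differentiableAt (isOpen_compl_singleton.mem_nhds hs)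

theorem exp_two_mul_arctan_mul_I (x : ℝ) :
    exp (2 * Real.arctan x * I) = (I - x) / (I + x) := by
  set t := Real.arctan x
  have hcos : (Real.cos t : ℂ) ≠ 0 := ofReal_ne_zero.mpr (Real.cos_arctan_pos x).ne'
  have hx : (x : ℂ) = Real.sin t / Real.cos t := by
    rw [← ofReal_div, ← Real.tan_eq_sin_div_cos, Real.tan_arctan]
  have hIx : I + x ≠ 0 := fun h => by simpa using congrArg im h
  have hpyth : (Real.sin t : ℂ) ^ 2 + Real.cos t ^ 2 = 1 := by
    exact_mod_cast Real.sin_sq_add_cos_sq t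
  rw [eq_div_iff hIx, show 2 * (t : ℂ) * I = t * I + t * I by ring, exp_add, exp_mul_I,
    ← ofReal_cos, ← ofReal_sin, hx]
  field_simp
  set c : ℂ := (Real.cos t : ℂ)
  set s : ℂ := (Real.sin t : ℂ)
  linear_combination (c * I - s) * hpyth + (2 * c ^ 2 * s + s ^ 3 + c * s ^ 2 * I) * I_sq

theorem one_sub_one_div_half_add_mul_I {γ : ℝ} (hγ : γ ≠ 0) :
    1 - 1 / (1 / 2 + γ * I) = exp (2 * Real.arctan (1 / (2 * γ)) * I) := by
  have hγ' : (γ : ℂ) ≠ 0 := ofReal_ne_zero.mpr hγ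
  have hα : 1 / 2 + γ * I ≠ 0 := fun h => by simpa using congrArg re h
  have hIx : I + ((1 / (2 * γ) : ℝ) : ℂ) ≠ 0 := fun h => by simpa using congrArg im h
  rw [exp_two_mul_arctan_mul_I, one_sub_div hα, div_eq_div_iff hα hIx]
  push_cast
  field_simp
  ring

/-- A simple zero `α = 1/2 + γi` (`γ ≠ 0`) of `ζ` is an indifferent fixed point of `ν_ζ`
with multiplier `e^{2πiθ}` where `θ = (1/π) arctan(1/(2γ))`; equivalently
`γ = 1/(2 tan(πθ))`. -/
theorem rotation_number_of_critical_zero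
    (γ : ℝ) (hγ : γ ≠ 0)
    (hzero : riemannZeta (1 / 2 + γ * Complex.I) = 0)
    (hsimple : deriv riemannZeta (1 / 2 + γ * Complex.I) ≠ 0) :
    nuZeta (1 / 2 + γ * Complex.I) = 1 / 2 + γ * Complex.I ∧
    ‖deriv nuZeta (1 / 2 + γ * Complex.I)‖ = 1 ∧
    deriv nuZeta (1 / 2 + γ * Complex.I) =
      Complex.exp (2 * Real.pi * Complex.I *
        ((1 / Real.pi) * Real.arctan (1 / (2 * γ)))) ∧
    γ = 1 / (2 * Real.tan (Real.pi * ((1 / Real.pi) * Real.arctan (1 / (2 * γ))))) := by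
  have hα0 : 1 / 2 + γ * I ≠ 0 := fun h => by simpa using congrArg re h
  have hα1 : 1 / 2 + γ * I ≠ 1 := fun h => hγ (by simpa using congrArg im h)
  have hmult : deriv nuZeta (1 / 2 + γ * I) = exp (2 * Real.arctan (1 / (2 * γ)) * I) := by
    rw [← one_sub_one_div_half_add_mul_I hγ]
    exact (hasDerivAt_nu_of_simple_zero (differentiableAt_deriv_riemannZeta hα1) hzero hsimple
      hα0).deriv
  have hθ : Real.pi * ((1 / Real.pi) * Real.arctan (1 / (2 * γ))) = Real.arctan (1 / (2 * γ)) := by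
    field_simp
  refine ⟨by rw [nuZeta, hzero, zero_div, sub_zero], ?_, ?_, ?_⟩
  · rw [hmult, ← ofReal_ofNat, ← ofReal_mul, norm_exp_ofReal_mul_I]
  · rw [hmult]
    congr 1
    push_cast
    field_simp
  · rw [hθ, Real.tan_arctan]
    field_simp
end

section
/- Let κ ∈ ℂ with |κ − 1| < 1, let α ∈ ℂ, and let g be holomorphic on a neighborhood of α with a zero of order m ≥ 1 at α (g(z) = (z−α)^m h(z), h(α) ≠ 0). Then the relaxed Newton map N_{g,κ}(z) = z − κ g(z)/g'(z) has a removable singularity at α; its holomorphic extension F satisfies F(α) = α and F'(α) = 1 − κ/m with |1 − κ/m| < 1 (so α is an attracting fixed point), and for all sufficiently small r > 0, (1/(2πi)) ∮_{|z−α|=r} dz/(z − N_{g,κ}(z)) = m/κ. -/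
open Complex Metric Filter Topology

/-- The relaxed Newton map of `g` with parameter `κ`: `N_{g,κ}(z) = z - κ g(z)/g'(z)`. -/
noncomputable def relaxedNewton (κ : ℂ) (g : ℂ → ℂ) (z : ℂ) : ℂ :=
  z - κ * (g z / deriv g z)

/-!
Near a zero of order `m`, write `g = (z - α)^m h`. Then `g' = (z - α)^(m-1) D` with
`D = m h + (z - α) h'`, so `g / g' = (z - α) h / D`, and `F z = z - κ (z - α) h / D` is a
holomorphic extension of the relaxed Newton map with `F α = α` and
`F' α = 1 - κ h(α) / D(α) = 1 - κ / m`, which is attracting because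
`|m - κ| ≤ (m - 1) + |1 - κ| < m`.
The integrand of the index is `1 / (z - F z) = (z - α)⁻¹ D / (κ h)`, so Cauchy's integral
formula evaluates the index to `D(α) / (κ h(α)) = m / κ`.
-/

theorem norm_one_sub_div_natCast_lt_one {κ : ℂ} (hκ : ‖κ - 1‖ < 1) {m : ℕ} (hm : 1 ≤ m) :
    ‖1 - κ / m‖ < 1 := by
  have hm₀ : (0 : ℝ) < m := by exact_mod_cast hm
  have hm₁ : ‖(m : ℂ) - 1‖ = m - 1 := by
    rw [← Nat.cast_one, ← Nat.cast_sub hm, Complex.norm_natCast, Nat.cast_sub hm, Nat.cast_one]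
  have hnum : ‖(m : ℂ) - κ‖ < m :=
    calc ‖(m : ℂ) - κ‖ = ‖((m : ℂ) - 1) - (κ - 1)‖ := by ring_nf
      _ ≤ ‖(m : ℂ) - 1‖ + ‖κ - 1‖ := norm_sub_le _ _
      _ < m := by rw [hm₁]; linarith
  have hmℂ : (m : ℂ) ≠ 0 := by exact_mod_cast hm₀.ne'
  rwa [show (1 : ℂ) - κ / m = (m - κ) / m by field_simp, norm_div, Complex.norm_natCast,
    div_lt_one hm₀]

section ZeroOfOrder

variable (m : ℕ) (α : ℂ) (h : ℂ → ℂ)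

/-- For `g = (z - α)^m h` one has `g' = (z - α)^(m-1) * reducedDeriv m α h`. -/
noncomputable def reducedDeriv (z : ℂ) : ℂ :=
  m * h z + (z - α) * deriv h z

/-- The holomorphic extension of the relaxed Newton map of `(z - α)^m h` across `α`. -/
noncomputable def reducedNewton (κ : ℂ) (z : ℂ) : ℂ :=
  z - κ * ((z - α) * (h z / reducedDeriv m α h z))

@[simp]
theorem reducedDeriv_self : reducedDeriv m α h α = m * h α := by
  simp [reducedDeriv]

@[simp]
theorem reducedNewton_self (κ : ℂ) : reducedNewton m α h κ α = α := by
  simp [reducedNewton]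

variable {m α h}

theorem differentiableOn_reducedDeriv {U : Set ℂ} (hU : IsOpen U) (hh : DifferentiableOn ℂ h U) :
    DifferentiableOn ℂ (reducedDeriv m α h) U :=
  ((differentiableOn_const _).mul hh).add
    ((differentiableOn_id.sub_const α).mul (hh.deriv hU))

theorem hasDerivAt_sub_pow_mul (hm : 1 ≤ m) {z : ℂ} (hz : DifferentiableAt ℂ h z) :
    HasDerivAt (fun w => (w - α) ^ m * h w) ((z - α) ^ (m - 1) * reducedDeriv m α h z) z := by
  refine ((((hasDerivAt_id' z).sub_const α).fun_pow m).fun_mul hz.hasDerivAt).congr_deriv ?_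
  obtain ⟨k, rfl⟩ := Nat.exists_eq_add_of_le' hm
  simp only [reducedDeriv, Nat.add_sub_cancel, Nat.cast_add, Nat.cast_one]
  ring

theorem relaxedNewton_eq_reducedNewton (hm : 1 ≤ m) (κ : ℂ) {g : ℂ → ℂ} {z : ℂ}
    (hg : g =ᶠ[𝓝 z] fun w => (w - α) ^ m * h w) (hz : DifferentiableAt ℂ h z) (hzα : z ≠ α) :
    relaxedNewton κ g z = reducedNewton m α h κ z := by
  obtain ⟨k, rfl⟩ := Nat.exists_eq_add_of_le' hm
  have hgz : g z = (z - α) ^ k * ((z - α) * h z) := by rw [hg.eq_of_nhds]; ring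
  have hg' := ((hasDerivAt_sub_pow_mul hm hz).congr_of_eventuallyEq hg).deriv
  rw [relaxedNewton, reducedNewton, hgz, hg', Nat.add_sub_cancel,
    mul_div_mul_left _ _ (pow_ne_zero k (sub_ne_zero.mpr hzα)), mul_div_assoc]

theorem hasDerivAt_reducedNewton_self (hm : m ≠ 0) (κ : ℂ) (hh : DifferentiableAt ℂ h α)
    (hD : DifferentiableAt ℂ (reducedDeriv m α h) α) (hhα : h α ≠ 0) :
    HasDerivAt (reducedNewton m α h κ) (1 - κ / m) α := by
  have hDα : reducedDeriv m α h α ≠ 0 := by simp [hm, hhα]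
  -- the factor `z - α` vanishes at `α`, so only the value of `h / D` at `α` enters the derivative
  have hquot := ((hasDerivAt_id' α).sub_const α).fun_mul
    (hh.hasDerivAt.fun_div hD.hasDerivAt hDα)
  refine ((hasDerivAt_id' α).fun_sub (hquot.const_mul κ)).congr_deriv ?_
  simp only [reducedDeriv_self, sub_self, zero_mul, add_zero, one_mul]
  field_simp

theorem differentiableOn_reducedNewton (κ : ℂ) {s : Set ℂ} (hh : DifferentiableOn ℂ h s)
    (hD : DifferentiableOn ℂ (reducedDeriv m α h) s) (hD₀ : ∀ z ∈ s, reducedDeriv m α h z ≠ 0) :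
    DifferentiableOn ℂ (reducedNewton m α h κ) s :=
  differentiableOn_id.fun_sub <|
    ((differentiableOn_id.sub_const α).fun_mul (hh.fun_div hD hD₀)).const_mul κ

theorem inv_sub_reducedNewton (κ z : ℂ) :
    (z - reducedNewton m α h κ z)⁻¹ = (z - α)⁻¹ * (κ⁻¹ * (reducedDeriv m α h z / h z)) := by
  simp only [reducedNewton, sub_sub_cancel, mul_inv, div_eq_mul_inv, inv_inv]
  ring

theorem circleIntegral_inv_sub_reducedNewton (κ : ℂ) {r : ℝ} (hr : 0 < r)
    (hh : DifferentiableOn ℂ h (closedBall α r))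
    (hD : DifferentiableOn ℂ (reducedDeriv m α h) (closedBall α r))
    (hh₀ : ∀ z ∈ closedBall α r, h z ≠ 0) :
    (2 * Real.pi * I)⁻¹ * (∮ z in C(α, r), (z - reducedNewton m α h κ z)⁻¹) = m / κ := by
  have hφ : DifferentiableOn ℂ (fun z => κ⁻¹ * (reducedDeriv m α h z / h z)) (closedBall α r) :=
    (hD.div hh hh₀).const_mul _
  have hα := hh₀ α (mem_closedBall_self hr.le)
  have hCauchy := (hφ.diffContOnCl_ball subset_rfl).two_pi_i_inv_smul_circleIntegral_sub_inv_smul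
      (mem_ball_self hr)
  simp only [smul_eq_mul] at hCauchy
  rw [circleIntegral.integral_congr hr.le fun z _ => inv_sub_reducedNewton κ z, hCauchy,
    reducedDeriv_self, mul_div_cancel_right₀ _ hα, div_eq_inv_mul]

end ZeroOfOrder

/-- If `g` has a zero of order `m ≥ 1` at `α` and `|κ - 1| < 1`, then the relaxed Newton
map `N_{g,κ}` has a removable singularity at `α`; its holomorphic extension `F` satisfies
`F α = α` and `F' α = 1 - κ/m` with `|1 - κ/m| < 1` (so `α` is an attracting fixed point),
and the holomorphic index of `N_{g,κ}` at `α` is `m/κ`. -/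
theorem relaxedNewton_at_zero_of_order
    (κ : ℂ) (hκ : ‖κ - 1‖ < 1)
    (α : ℂ) (m : ℕ) (hm : 1 ≤ m)
    (g h : ℂ → ℂ) (U : Set ℂ) (hU : IsOpen U) (hαU : α ∈ U)
    (hh : DifferentiableOn ℂ h U) (hhα : h α ≠ 0)
    (hfact : ∀ z ∈ U, g z = (z - α) ^ m * h z) :
    ∃ (F : ℂ → ℂ) (V : Set ℂ), IsOpen V ∧ α ∈ V ∧ DifferentiableOn ℂ F V ∧
      (∀ z ∈ V, z ≠ α → F z = relaxedNewton κ g z) ∧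
      F α = α ∧ deriv F α = 1 - κ / m ∧ ‖1 - κ / m‖ < 1 ∧
      ∃ r₀ > 0, ∀ r : ℝ, 0 < r → r < r₀ →
        (2 * Real.pi * Complex.I)⁻¹ *
          (∮ z in C(α, r), (z - relaxedNewton κ g z)⁻¹) = m / κ := by
  have hm₀ : m ≠ 0 := by omega
  have hUα := hU.mem_nhds hαU
  have hD := differentiableOn_reducedDeriv (m := m) (α := α) hU hh
  have hDα : reducedDeriv m α h α ≠ 0 := by simp [hm₀, hhα]
  obtain ⟨r₀, hr₀, hball⟩ : ∃ r₀ > 0, ∀ z ∈ ball α r₀,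
      (z ∈ U ∧ h z ≠ 0) ∧ reducedDeriv m α h z ≠ 0 :=
    eventually_nhds_iff_ball.mp <| ((hU.eventually_mem hαU).and
      ((hh.continuousOn.continuousAt hUα).eventually_ne hhα)).and
      ((hD.continuousOn.continuousAt hUα).eventually_ne hDα)
  have hVU : ball α r₀ ⊆ U := fun z hz => (hball z hz).1.1
  have hNewton : ∀ z ∈ U, z ≠ α → relaxedNewton κ g z = reducedNewton m α h κ z :=
    fun z hz hzα => relaxedNewton_eq_reducedNewton hm κ
      (eventually_of_mem (hU.mem_nhds hz) hfact) (hh.differentiableAt (hU.mem_nhds hz)) hzα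
  refine ⟨reducedNewton m α h κ, ball α r₀, isOpen_ball, mem_ball_self hr₀, ?_,
    fun z hz hzα => (hNewton z (hVU hz) hzα).symm, reducedNewton_self m α h κ,
    (hasDerivAt_reducedNewton_self hm₀ κ (hh.differentiableAt hUα)
      (hD.differentiableAt hUα) hhα).deriv,
    norm_one_sub_div_natCast_lt_one hκ hm, r₀, hr₀, fun r hr hrr₀ => ?_⟩
  · exact differentiableOn_reducedNewton κ (hh.mono hVU) (hD.mono hVU) fun z hz => (hball z hz).2
  · have hsub : closedBall α r ⊆ ball α r₀ := closedBall_subset_ball hrr₀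
    rw [circleIntegral.integral_congr hr.le fun z hz => by
      rw [hNewton z (hVU (hsub (sphere_subset_closedBall hz))) (ne_of_mem_sphere hz hr.ne')]]
    exact circleIntegral_inv_sub_reducedNewton κ hr (hh.mono (hsub.trans hVU))
      (hD.mono (hsub.trans hVU)) fun z hz => (hball z (hsub hz)).1.2
end
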